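/- arXiv:2508.08852 — 4 statements merged into one kernel-verified Lean document; each statement's English description precedes it below -/
import Mathlib

section
/- Let p : ℝ → ℝ be a polynomial such that |p(k)| ≤ 1/3 for every even integer k ∈ {0,…,n} and |p(k) − 1| ≤ 1/3 for every odd integer k ∈ {0,…,n}. Then deg(p) ≥ n. -/
open Polynomial

/-- A real polynomial that is within 1/3 of 0 at every even integer in `{0,…,n}` and
within 1/3 of 1 at every odd integer in `{0,…,n}` has degree at least `n`. -/
theorem stmt9 (n : ℕ) (hn : 1 ≤ n) (p : Polynomial ℝ)
    (heven : ∀ k : ℕ, k ≤ n → Even k → |p.eval (k : ℝ)| ≤ 1 / 3)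
    (hodd : ∀ k : ℕ, k ≤ n → Odd k → |p.eval (k : ℝ) - 1| ≤ 1 / 3) :
    n ≤ p.natDegree := by
  set q : Polynomial ℝ := C 2 * p - 1 with hqdef
  have hqeval : ∀ x : ℝ, q.eval x = 2 * p.eval x - 1 := by
    intro x; simp [hqdef]
  have hq0 : ∀ k : ℕ, k ≤ n → Even k → q.eval (k : ℝ) ≤ -(1/3) := by
    intro k hk he
    have := abs_le.mp (heven k hk he)
    rw [hqeval]; linarith [this.1, this.2]
  have hq1 : ∀ k : ℕ, k ≤ n → Odd k → 1/3 ≤ q.eval (k : ℝ) := by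
    intro k hk ho
    have := abs_le.mp (hodd k hk ho)
    rw [hqeval]; linarith [this.1, this.2]
  have hqne : q ≠ 0 := by
    intro h
    have h1 : (1:ℝ)/3 ≤ q.eval ((1:ℕ) : ℝ) := hq1 1 hn odd_one
    rw [h] at h1; simp at h1; linarith
  have key : ∀ k : ℕ, k < n → ∃ x ∈ Set.Ioo (k : ℝ) ((k : ℝ) + 1), q.eval x = 0 := by
    intro k hk
    have hc : ContinuousOn (fun x => q.eval x) (Set.Icc (k : ℝ) ((k : ℝ) + 1)) :=
      (q.continuous).continuousOn
    have hle : (k : ℝ) ≤ (k : ℝ) + 1 := by linarith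
    have hcast : ((k + 1 : ℕ) : ℝ) = (k : ℝ) + 1 := by push_cast; ring
    rcases Nat.even_or_odd k with he | ho
    · have h1 : q.eval (k : ℝ) ≤ -(1/3) := hq0 k hk.le he
      have h2 : 1/3 ≤ q.eval ((k : ℝ) + 1) := by
        rw [← hcast]; exact hq1 (k + 1) hk (Even.add_one he)
      have := intermediate_value_Ioo hle hc
      obtain ⟨x, hx, hx0⟩ := this (show (0:ℝ) ∈ Set.Ioo _ _ from ⟨by linarith, by linarith⟩)
      exact ⟨x, hx, hx0⟩
    · have h1 : 1/3 ≤ q.eval (k : ℝ) := hq1 k hk.le ho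
      have h2 : q.eval ((k : ℝ) + 1) ≤ -(1/3) := by
        rw [← hcast]; exact hq0 (k + 1) hk (Odd.add_one ho)
      have := intermediate_value_Ioo' hle hc
      obtain ⟨x, hx, hx0⟩ := this (show (0:ℝ) ∈ Set.Ioo _ _ from ⟨by linarith, by linarith⟩)
      exact ⟨x, hx, hx0⟩
  choose f hfmem hf0 using key
  set g : Fin n → ℝ := fun i => f i i.2 with hg
  have hginj : Function.Injective g := by
    have hmono : StrictMono g := by
      intro i j hij
      have h1 : g i < (i : ℝ) + 1 := (hfmem i i.2).2
      have h2 : (j : ℝ) < g j := (hfmem j j.2).1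
      have h3 : (i : ℕ) + 1 ≤ (j : ℕ) := hij
      have h4 : ((i : ℕ) : ℝ) + 1 ≤ ((j : ℕ) : ℝ) := by exact_mod_cast h3
      linarith
    exact hmono.injective
  have hsub : Finset.image g Finset.univ ⊆ q.roots.toFinset := by
    intro x hx
    obtain ⟨i, _, rfl⟩ := Finset.mem_image.mp hx
    rw [Multiset.mem_toFinset, mem_roots hqne]
    exact hf0 i i.2
  have hcard : n ≤ q.roots.toFinset.card := by
    have := Finset.card_le_card hsub
    rwa [Finset.card_image_of_injective _ hginj, Finset.card_univ, Fintype.card_fin] at this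
  have h1 : q.roots.toFinset.card ≤ Multiset.card q.roots := q.roots.toFinset_card_le
  have h2 : Multiset.card q.roots ≤ q.natDegree := q.card_roots'
  have h3 : q.natDegree ≤ p.natDegree := by
    calc q.natDegree ≤ max (C 2 * p).natDegree (1 : Polynomial ℝ).natDegree :=
          natDegree_sub_le _ _
      _ ≤ p.natDegree := by
          simp [natDegree_C_mul (show (2:ℝ) ≠ 0 by norm_num)]
  omega
end

section
/- (Record size) Suppose a state on ℂ^n ⊗ ℂ^m ⊗ (ℂ^m)^{⊗n} has the form Σ_{i,b,c} α_{i,b,c} |i,b⟩ ⊗ Σ_{x∈Σ^n} ω^{c·x} |x⟩ where α_{i,b,c} = 0 unless |{j : c_j ≠ 0}| ≤ t, with ω = e^{2πi/m} and c·x = Σ_j c_j x_j mod m. Then after applying the recording operator S = S_1 ⊗ ⋯ ⊗ S_n (where each S_j maps the uniform superposition m^{−1/2} Σ_{x_j} |x_j⟩ to |∅⟩, maps |∅⟩ to the uniform superposition, and fixes the other Fourier states m^{−1/2} Σ_{x_j} ω^{b x_j}|x_j⟩ for b ≠ 0), the resulting state is supported only on basis vectors |i,b⟩ ⊗ |x_1,…,x_n⟩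 with |{j : x_j ≠ ∅}| ≤ t. -/
/-- `m`-th root of unity. -/
noncomputable def omegaC (m : ℕ) : ℂ := Complex.exp (2 * Real.pi * Complex.I / m)

/-- Single-register recording operator on `ℂ^{m+1}` (basis `|0⟩,…,|m-1⟩,|∅⟩`, with
`none = |∅⟩`): swaps the uniform superposition with `|∅⟩` and fixes the other
Fourier states. In the standard basis its entries are as below. -/
noncomputable def recOp (m : ℕ) : Matrix (Option (Fin m)) (Option (Fin m)) ℂ :=
  fun r s =>
    match r, s with
    | some y', some y => (if y' = y then 1 else 0) - 1 / (m : ℂ)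
    | none, some _ => 1 / (Real.sqrt m : ℂ)
    | some _, none => 1 / (Real.sqrt m : ℂ)
    | none, none => 0

/-- Record size: if a joint state of the algorithm and input has amplitudes
`ψ((i,b), x) = Σ_c α_{i,b,c} ω^{c·x}` where `α_{i,b,c} = 0` unless at most `t` of the
frequencies `c_j` are nonzero, then after applying the recording operator
`S = S_1 ⊗ ⋯ ⊗ S_n` the state is supported only on records with at most `t`
non-empty coordinates: its amplitude vanishes on any record with more than `t`
coordinates different from `∅`. -/
theorem stmt12 (n m t : ℕ) (hm : 2 ≤ m)
    (α : Fin n → Fin m → (Fin n → Fin m) → ℂ)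
    (hα : ∀ i b c, α i b c ≠ 0 →
      (Finset.univ.filter fun j => (c j : ℕ) ≠ 0).card ≤ t)
    (ψ : (Fin n × Fin m) × (Fin n → Option (Fin m)) → ℂ)
    (hψ : ∀ (i : Fin n) (b : Fin m) (r : Fin n → Option (Fin m)),
      ψ ((i, b), r) =
        ∑ c : Fin n → Fin m, ∑ x : Fin n → Fin m,
          α i b c * omegaC m ^ (∑ j, (c j : ℕ) * (x j : ℕ)) *
            (if r = (fun j => some (x j)) then 1 else 0)) :
    ∀ (i : Fin n) (b : Fin m) (r : Fin n → Option (Fin m)),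
      t < (Finset.univ.filter fun j => r j ≠ none).card →
      (∑ r' : Fin n → Option (Fin m),
          (∏ j, recOp m (r j) (r' j)) * ψ ((i, b), r')) = 0 := by
  intro i b r hr
  have hm0 : (m : ℂ) ≠ 0 := by
    simp only [ne_eq, Nat.cast_eq_zero]; omega
  calc (∑ r' : Fin n → Option (Fin m),
          (∏ j, recOp m (r j) (r' j)) * ψ ((i, b), r'))
      = ∑ c : Fin n → Fin m, ∑ x : Fin n → Fin m,
          α i b c * omegaC m ^ (∑ j, (c j : ℕ) * (x j : ℕ)) *
            ∏ j, recOp m (r j) (some (x j)) := by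
        simp only [hψ, Finset.mul_sum]
        rw [Finset.sum_comm]
        refine Finset.sum_congr rfl fun c _ => ?_
        rw [Finset.sum_comm]
        refine Finset.sum_congr rfl fun x _ => ?_
        rw [Finset.sum_eq_single (fun j => some (x j))]
        · simp [mul_comm]
        · intro r' _ hne; simp [hne]
        · simp
    _ = ∑ c : Fin n → Fin m,
          α i b c * ∏ j, ∑ y : Fin m,
            omegaC m ^ ((c j : ℕ) * (y : ℕ)) * recOp m (r j) (some y) := by
        refine Finset.sum_congr rfl fun c _ => ?_
        rw [Finset.prod_univ_sum]
        rw [Finset.mul_sum]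
        refine Finset.sum_congr rfl fun x _ => ?_
        rw [← Finset.prod_pow_eq_pow_sum, mul_assoc, ← Finset.prod_mul_distrib]
    _ = 0 := by
        refine Finset.sum_eq_zero fun c _ => ?_
        by_cases hα0 : α i b c = 0
        · simp [hα0]
        · have hct := hα i b c hα0
          have hns : ¬ (Finset.univ.filter fun j => r j ≠ none) ⊆
              (Finset.univ.filter fun j => (c j : ℕ) ≠ 0) := by
            intro hsub
            have := Finset.card_le_card hsub
            omega
          obtain ⟨j, hj1, hj2⟩ := Finset.not_subset.mp hns
          have hrj : r j ≠ none := by simpa using hj1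
          have hcj : (c j : ℕ) = 0 := by simpa using hj2
          rw [Finset.prod_eq_zero (Finset.mem_univ j), mul_zero]
          obtain ⟨y', hy'⟩ := Option.ne_none_iff_exists'.mp hrj
          rw [hy']
          simp only [hcj, zero_mul, pow_zero, one_mul, recOp]
          rw [Finset.sum_sub_distrib]
          simp [Finset.sum_ite_eq, hm0]
end

section
/- (Recording action, empty case) Let m ≥ 2, ω = e^{2πi/m}, and let S be the single-register recording operator on ℂ^{m+1} that swaps the uniform superposition m^{−1/2} Σ_{y∈Σ} |y⟩ with |∅⟩ and fixes the other Fourier states. Let O^b be the unitary on ℂ^{m+1} with O^b|y⟩ = ω^{by}|y⟩ for y ∈ Σ and O^b|∅⟩ = |∅⟩. Then for b ≠ 0, S O^b S |∅⟩ = m^{−1/2} Σ_{y∈Σ} ω^{by} |y⟩, and for y ∈ Σ, S O^b S |y⟩ = ω^{by}|y⟩ + (ω^{by}/√m)|∅⟩ + Σ_{y'∈Σ} ((1 − ω^{by} − ω^{by'})/m) |y'⟩. -/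
noncomputable def phaseOp (m : ℕ) (b : Fin m) : Matrix (Option (Fin m)) (Option (Fin m)) ℂ :=
  fun r s =>
    if r = s then
      (match r with
       | some y => omegaC m ^ ((b : ℕ) * (y : ℕ))
       | none => 1)
    else 0

lemma sum_omega (m : ℕ) (hm : 2 ≤ m) (b : Fin m) (hb : (b : ℕ) ≠ 0) :
    ∑ y : Fin m, omegaC m ^ ((b : ℕ) * (y : ℕ)) = 0 := by
  have hm0 : m ≠ 0 := by omega
  have hprim : IsPrimitiveRoot (omegaC m) m := Complex.isPrimitiveRoot_exp m hm0
  have hz1 : omegaC m ^ (b : ℕ) ≠ 1 :=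
    hprim.pow_ne_one_of_pos_of_lt hb b.isLt
  have h : ∑ y : Fin m, (omegaC m ^ (b : ℕ)) ^ (y : ℕ) = 0 := by
    rw [Fin.sum_univ_eq_sum_range, geom_sum_eq hz1, ← pow_mul, mul_comm, pow_mul,
      hprim.pow_eq_one, one_pow, sub_self, zero_div]
  simpa [pow_mul] using h

lemma phase_diag (m : ℕ) (b : Fin m) :
    phaseOp m b = Matrix.diagonal
      (fun o => o.elim 1 (fun y => omegaC m ^ ((b : ℕ) * (y : ℕ)))) := by
  ext r s
  rcases r with _ | y <;> rcases s with _ | y' <;>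
    simp [phaseOp, Matrix.diagonal]

lemma hM (m : ℕ) (b : Fin m) (r s : Option (Fin m)) :
    (recOp m * phaseOp m b * recOp m) r s
      = recOp m r none * recOp m none s
        + ∑ y'' : Fin m,
            recOp m r (some y'') * omegaC m ^ ((b : ℕ) * (y'' : ℕ)) * recOp m (some y'') s := by
  rw [phase_diag, Matrix.mul_apply, Fintype.sum_option]
  simp [Matrix.mul_diagonal]

/-- Recording action (Zhandry's compressed oracle, single coordinate): for `b ≠ 0`,
`S O^b S |∅⟩ = m^{-1/2} Σ_y ω^{by} |y⟩` and
`S O^b S |y⟩ = ω^{by}|y⟩ + (ω^{by}/√m)|∅⟩ + Σ_{y'} ((1 - ω^{by} - ω^{by'})/m)|y'⟩`. -/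
theorem stmt13 (m : ℕ) (hm : 2 ≤ m) (b : Fin m) (hb : (b : ℕ) ≠ 0) :
    (∀ y : Fin m,
      (recOp m * phaseOp m b * recOp m) (some y) none
        = omegaC m ^ ((b : ℕ) * (y : ℕ)) / (Real.sqrt m : ℂ)) ∧
    ((recOp m * phaseOp m b * recOp m) none none = 0) ∧
    (∀ y y' : Fin m,
      (recOp m * phaseOp m b * recOp m) (some y') (some y)
        = (if y' = y then omegaC m ^ ((b : ℕ) * (y : ℕ)) else 0)
          + (1 - omegaC m ^ ((b : ℕ) * (y : ℕ)) - omegaC m ^ ((b : ℕ) * (y' : ℕ))) / (m : ℂ)) ∧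
    (∀ y : Fin m,
      (recOp m * phaseOp m b * recOp m) none (some y)
        = omegaC m ^ ((b : ℕ) * (y : ℕ)) / (Real.sqrt m : ℂ)) := by
  have hmne : m ≠ 0 := by omega
  have hm0 : (m : ℂ) ≠ 0 := Nat.cast_ne_zero.mpr hmne
  have hs : ((Real.sqrt m : ℝ) : ℂ) * (Real.sqrt m : ℂ) = (m : ℂ) := by
    rw [← Complex.ofReal_mul, Real.mul_self_sqrt (Nat.cast_nonneg m)]
    norm_cast
  have hsum := sum_omega m hm b hb
  have hsum' : ∀ c d : ℂ, ∑ y'' : Fin m, c * omegaC m ^ ((b : ℕ) * (y'' : ℕ)) * d = 0 := by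
    intro c d
    have : ∑ y'' : Fin m, c * omegaC m ^ ((b : ℕ) * (y'' : ℕ)) * d
        = (∑ y'' : Fin m, omegaC m ^ ((b : ℕ) * (y'' : ℕ))) * (c * d) := by
      rw [Finset.sum_mul]; exact Finset.sum_congr rfl fun _ _ => by ring
    rw [this, hsum, zero_mul]
  refine ⟨?_, ?_, ?_, ?_⟩
  · intro y
    rw [hM]
    simp only [recOp]
    rw [Finset.sum_congr rfl (fun y'' _ => show _ =
        (if y = y'' then omegaC m ^ ((b : ℕ) * (y'' : ℕ)) * (1 / (Real.sqrt m : ℂ)) else 0)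
        + (-(1 / (m : ℂ))) * omegaC m ^ ((b : ℕ) * (y'' : ℕ)) * (1 / (Real.sqrt m : ℂ)) from by
      split <;> ring)]
    rw [Finset.sum_add_distrib, hsum', Finset.sum_ite_eq]
    simp
    ring
  · rw [hM]
    simp only [recOp]
    rw [hsum']
    ring
  · intro y y'
    rw [hM]
    simp only [recOp]
    rw [Finset.sum_congr rfl (fun y'' _ => show _ =
        ((if y' = y'' then omegaC m ^ ((b : ℕ) * (y'' : ℕ)) * ((if y'' = y then 1 else 0) - 1 / (m : ℂ)) else 0)
         + (if y'' = y then (-(1 / (m : ℂ))) * omegaC m ^ ((b : ℕ) * (y'' : ℕ)) else 0))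
        + ((1 / (m : ℂ)) * (1 / (m : ℂ))) * omegaC m ^ ((b : ℕ) * (y'' : ℕ)) * 1 from by
      by_cases h1 : y' = y''
      · subst h1; by_cases h2 : y' = y <;> simp [h2] <;> ring
      · by_cases h2 : y'' = y
        · subst h2; simp [h1]; ring
        · simp [h1, h2]; ring)]
    rw [Finset.sum_add_distrib, Finset.sum_add_distrib, hsum',
      Finset.sum_ite_eq, Finset.sum_ite_eq']
    simp only [Finset.mem_univ, if_true, add_zero]
    rw [div_mul_div_comm, one_mul, hs]
    by_cases h : y' = y
    · subst h
      simp only [if_pos rfl, ↓reduceIte]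
      field_simp
      ring
    · simp only [if_neg h]
      field_simp
      ring
  · intro y
    rw [hM]
    simp only [recOp]
    rw [Finset.sum_congr rfl (fun y'' _ => show _ =
        (if y'' = y then (1 / (Real.sqrt m : ℂ)) * omegaC m ^ ((b : ℕ) * (y'' : ℕ)) else 0)
        + (1 / (Real.sqrt m : ℂ)) * omegaC m ^ ((b : ℕ) * (y'' : ℕ)) * (-(1 / (m : ℂ))) from by
      split <;> ring)]
    rw [Finset.sum_add_distrib, hsum', Finset.sum_ite_eq']
    simp
    ring
end

section
/- (Effective spectral gap lemma) Let Π and Δ be orthogonal projectors on a finite-dimensional Hilbert space and set R = (2Π − I)(2Δ − I). For θ ≥ 0 let Λ_θ be the orthogonal projector onto the span of eigenvectors of R with eigenvalue e^{iφ} for |φ| ≤ θ. Then for any vector t with Δ t = 0, ‖Λ_θ Π t‖ ≤ (θ/2)·‖t‖. -/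
open scoped ComplexConjugate

/-- `‖e^{ix} - 1‖ ≤ |x|`. -/
lemma exp_I_sub_one_norm_le (x : ℝ) : ‖Complex.exp ((x : ℂ) * Complex.I) - 1‖ ≤ |x| := by
  have hre : (Complex.exp ((x : ℂ) * Complex.I) - 1).re = Real.cos x - 1 := by
    simp [Complex.exp_ofReal_mul_I_re]
  have him : (Complex.exp ((x : ℂ) * Complex.I) - 1).im = Real.sin x := by
    simp [Complex.exp_ofReal_mul_I_im]
  have hsq : ‖Complex.exp ((x : ℂ) * Complex.I) - 1‖ ^ 2
      = (Real.cos x - 1) ^ 2 + (Real.sin x) ^ 2 := by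
    rw [Complex.sq_norm, Complex.normSq_apply, hre, him]
    ring
  have h1 : (Real.cos x - 1) ^ 2 + (Real.sin x) ^ 2 ≤ x ^ 2 := by
    have hh : Real.sin (x / 2) ^ 2 = (1 - Real.cos x) / 2 := by
      have habs := Real.abs_sin_half x
      have h0 : (0:ℝ) ≤ (1 - Real.cos x) / 2 := by nlinarith [Real.cos_le_one x]
      calc Real.sin (x / 2) ^ 2 = |Real.sin (x / 2)| ^ 2 := (sq_abs _).symm
        _ = (1 - Real.cos x) / 2 := by rw [habs, Real.sq_sqrt h0]
    have h2 : Real.sin (x / 2) ^ 2 ≤ (x / 2) ^ 2 := Real.sin_sq_le_sq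
    have h3 := Real.sin_sq_add_cos_sq x
    nlinarith
  have := hsq.le.trans h1
  calc ‖Complex.exp ((x : ℂ) * Complex.I) - 1‖
      = Real.sqrt (‖Complex.exp ((x : ℂ) * Complex.I) - 1‖ ^ 2) :=
        (Real.sqrt_sq (norm_nonneg _)).symm
    _ ≤ Real.sqrt (x ^ 2) := Real.sqrt_le_sqrt this
    _ = |x| := Real.sqrt_sq_eq_abs x

lemma orthonormal_norm_sum_sq {E : Type*} [NormedAddCommGroup E] [InnerProductSpace ℂ E]
    {ι : Type*} {u : ι → E} (hu : Orthonormal ℂ u) (s : Finset ι) (c : ι → ℂ) :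
    ‖∑ j ∈ s, c j • u j‖ ^ 2 = ∑ j ∈ s, ‖c j‖ ^ 2 := by
  have h1 : (inner ℂ (∑ j ∈ s, c j • u j) (∑ j ∈ s, c j • u j) : ℂ)
      = ∑ j ∈ s, conj (c j) * c j := by
    rw [sum_inner]
    refine Finset.sum_congr rfl fun j hj => ?_
    rw [inner_smul_left, hu.inner_right_sum c hj]
  have h2 : ‖∑ j ∈ s, c j • u j‖ ^ 2
      = RCLike.re (inner ℂ (∑ j ∈ s, c j • u j) (∑ j ∈ s, c j • u j) : ℂ) :=
    (inner_self_eq_norm_sq _).symm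
  rw [h2, h1, map_sum]
  refine Finset.sum_congr rfl fun j _ => ?_
  rw [RCLike.conj_mul, ← RCLike.ofReal_pow, RCLike.ofReal_re]

/-- Effective spectral gap lemma: let `Pr, D` be orthogonal projectors and
`R = (2Pr - I)(2D - I)`; let `u` be an orthonormal eigenbasis of `R` with eigenphases
`φ j ∈ (-π, π]`. For `θ ≥ 0`, let `Λ_θ` project onto the eigenvectors with `|φ j| ≤ θ`.
Then for any `t` with `D t = 0`, `‖Λ_θ (Pr t)‖ ≤ (θ/2) ‖t‖`. -/
theorem stmt18 {E : Type*} [NormedAddCommGroup E] [InnerProductSpace ℂ E]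
    [FiniteDimensional ℂ E] {ι : Type*} [Fintype ι]
    (Pr D : E →L[ℂ] E)
    (hPr : Pr.comp Pr = Pr) (hPrsa : ∀ v w : E, (inner ℂ (Pr v) w : ℂ) = inner ℂ v (Pr w))
    (hD : D.comp D = D) (hDsa : ∀ v w : E, (inner ℂ (D v) w : ℂ) = inner ℂ v (D w))
    (R : E →L[ℂ] E)
    (hR : R = ((2 : ℂ) • Pr - 1) * ((2 : ℂ) • D - 1))
    (u : ι → E) (hu : Orthonormal ℂ u)
    (hspan : Submodule.span ℂ (Set.range u) = ⊤)
    (φ : ι → ℝ) (hφ : ∀ j, φ j ∈ Set.Ioc (-Real.pi) Real.pi)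
    (heig : ∀ j, R (u j) = Complex.exp ((φ j : ℂ) * Complex.I) • u j)
    (θ : ℝ) (hθ : 0 ≤ θ)
    (t : E) (ht : D t = 0) :
    ‖∑ j ∈ Finset.univ.filter (fun j => |φ j| ≤ θ),
        (inner ℂ (u j) (Pr t) : ℂ) • u j‖ ≤ (θ / 2) * ‖t‖ := by
  -- R t = t - 2 Pr t
  have hRt : R t = t - (2 : ℂ) • Pr t := by
    have h1 : ((2 : ℂ) • D - 1) t = -t := by
      simp [ContinuousLinearMap.sub_apply, ht]
    rw [hR]
    simp only [ContinuousLinearMap.mul_apply, h1, map_neg,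
      ContinuousLinearMap.sub_apply, ContinuousLinearMap.smul_apply,
      ContinuousLinearMap.one_apply]
    abel
  -- expand t in the basis
  have hts : ∑ k, (inner ℂ (u k) t : ℂ) • u k = t := by
    have b : OrthonormalBasis ι ℂ E := OrthonormalBasis.mk hu (le_of_eq hspan.symm)
    have hb : ⇑(OrthonormalBasis.mk hu (le_of_eq hspan.symm)) = u :=
      OrthonormalBasis.coe_mk hu _
    have := (OrthonormalBasis.mk hu (le_of_eq hspan.symm)).sum_repr' t
    rwa [hb] at this
  -- eigenphase formula for inner products with R t
  have hinnerR : ∀ j, (inner ℂ (u j) (R t) : ℂ)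
      = Complex.exp ((φ j : ℂ) * Complex.I) * inner ℂ (u j) t := by
    intro j
    conv_lhs => rw [← hts]
    rw [map_sum]
    have : ∀ k, R ((inner ℂ (u k) t : ℂ) • u k)
        = ((inner ℂ (u k) t : ℂ) * Complex.exp ((φ k : ℂ) * Complex.I)) • u k := by
      intro k
      rw [map_smul, heig k, smul_smul]
    simp_rw [this]
    rw [hu.inner_right_fintype]
    ring
  -- coefficient formula
  have hct : ∀ j, (inner ℂ (u j) (Pr t) : ℂ)
      = (1 - Complex.exp ((φ j : ℂ) * Complex.I)) / 2 * inner ℂ (u j) t := by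
    intro j
    have h2 : (2 : ℂ) • Pr t = t - R t := by rw [hRt]; abel
    have h3 : (inner ℂ (u j) ((2 : ℂ) • Pr t) : ℂ) = inner ℂ (u j) t - inner ℂ (u j) (R t) := by
      rw [h2, inner_sub_right]
    rw [inner_smul_right, hinnerR j] at h3
    have : (2 : ℂ) ≠ 0 := two_ne_zero
    field_simp
    linear_combination h3
  -- per-term bound
  have hbound : ∀ j, |φ j| ≤ θ →
      ‖(inner ℂ (u j) (Pr t) : ℂ)‖ ≤ (θ / 2) * ‖(inner ℂ (u j) t : ℂ)‖ := by
    intro j hj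
    rw [hct j, norm_mul, norm_div]
    have h1 : ‖(1 : ℂ) - Complex.exp ((φ j : ℂ) * Complex.I)‖ ≤ θ := by
      rw [norm_sub_rev]
      exact (exp_I_sub_one_norm_le (φ j)).trans hj
    have h2 : ‖(2 : ℂ)‖ = 2 := by norm_num
    rw [h2]
    gcongr
  set s := Finset.univ.filter (fun j => |φ j| ≤ θ) with hs
  have hsq : ‖∑ j ∈ s, (inner ℂ (u j) (Pr t) : ℂ) • u j‖ ^ 2 ≤ ((θ / 2) * ‖t‖) ^ 2 := by
    rw [orthonormal_norm_sum_sq hu]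
    calc ∑ j ∈ s, ‖(inner ℂ (u j) (Pr t) : ℂ)‖ ^ 2
        ≤ ∑ j ∈ s, ((θ / 2) * ‖(inner ℂ (u j) t : ℂ)‖) ^ 2 := by
          refine Finset.sum_le_sum fun j hj => ?_
          have hj' : |φ j| ≤ θ := (Finset.mem_filter.mp hj).2
          have := hbound j hj'
          exact pow_le_pow_left₀ (norm_nonneg _) this 2
      _ = (θ / 2) ^ 2 * ∑ j ∈ s, ‖(inner ℂ (u j) t : ℂ)‖ ^ 2 := by
          rw [Finset.mul_sum]; refine Finset.sum_congr rfl fun j _ => by ring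
      _ ≤ (θ / 2) ^ 2 * ‖t‖ ^ 2 := by
          gcongr
          exact hu.sum_inner_products_le t
      _ = ((θ / 2) * ‖t‖) ^ 2 := by ring
  have hnn : (0 : ℝ) ≤ (θ / 2) * ‖t‖ := by positivity
  calc ‖∑ j ∈ s, (inner ℂ (u j) (Pr t) : ℂ) • u j‖
      = Real.sqrt (‖∑ j ∈ s, (inner ℂ (u j) (Pr t) : ℂ) • u j‖ ^ 2) :=
        (Real.sqrt_sq (norm_nonneg _)).symm
    _ ≤ Real.sqrt (((θ / 2) * ‖t‖) ^ 2) := Real.sqrt_le_sqrt hsq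
    _ = (θ / 2) * ‖t‖ := Real.sqrt_sq hnn
end
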